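/- For every n ≥ 3, the real zero set Z(σ_{3,n} − σ_{1,n}, ℝ^n) = {x ∈ ℝ^n : σ_{3,n}(x) = σ_{1,n}(x)} has exactly 3 connected components. -/

import Mathlib

/-!
Split `x ∈ ℝ^{m+1}` as `x = (t, y)` with `t = x 0`. Since `σ₃ - σ₁` is affine in each variable,
`(σ₃ - σ₁)(t, y) = (σ₃(y) - σ₁(y)) + t (σ₂(y) - 1)`. The two coefficients never vanish together:
in the power sums `pₖ = ∑ yᵢᵏ`, `σ₂ = 1` and `σ₃ = σ₁` read `p₂ = p₁² - 2`, `p₃ = p₁³`, which is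
incompatible with Cauchy–Schwarz applied to `yᵢ` and to `yᵢ² - p₁ yᵢ` together with `p₄ ≤ p₂²`.
Hence the zero set is the graph of a continuous function over `{σ₂ ≠ 1} ⊆ ℝ^m`, which is the
disjoint union of the open star-convex sets `{σ₂ < 1}`, `{σ₂ > 1, σ₁ > 0}` and
`{σ₂ > 1, σ₁ < 0}` (on `σ₂ > 1`, `σ₁² ≥ 2σ₂ > 2`).
-/

open MvPolynomial Finset
open scoped Function

theorem Multiset.esymm_cons_succ {R : Type*} [CommSemiring R] (a : R) (s : Multiset R) (k : ℕ) :
    (a ::ₘ s).esymm (k + 1) = s.esymm (k + 1) + a * s.esymm k := by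
  simp [Multiset.esymm, Multiset.powersetCard_cons, Multiset.prod_cons, Multiset.sum_map_mul_left]

namespace MvPolynomial

variable {R σ : Type*}

theorem eval_esymm_cons_succ [CommSemiring R] {m : ℕ} (t : R) (y : Fin m → R) (k : ℕ) :
    eval (Fin.cons t y : Fin (m + 1) → R) (esymm (Fin (m + 1)) R (k + 1)) =
      eval y (esymm (Fin m) R (k + 1)) + t * eval y (esymm (Fin m) R k) := by
  simp only [← aeval_eq_eval, aeval_esymm_eq_multiset_esymm, Fin.univ_succ]
  simp only [cons_val, Multiset.map_cons, Fin.cons_zero, map_val, Multiset.map_map]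
  rw [Multiset.esymm_cons_succ]
  rfl

theorem eval_esymm_three_sub_esymm_one_cons [CommRing R] {m : ℕ} (t : R) (y : Fin m → R) :
    eval (Fin.cons t y : Fin (m + 1) → R) (esymm (Fin (m + 1)) R 3 - esymm (Fin (m + 1)) R 1) =
      eval y (esymm (Fin m) R 3) - eval y (esymm (Fin m) R 1) +
        t * (eval y (esymm (Fin m) R 2) - 1) := by
  rw [map_sub, eval_esymm_cons_succ, eval_esymm_cons_succ, esymm_zero, map_one]
  ring

variable [Fintype σ]

theorem eval_esymm_smul [CommSemiring R] (c : R) (x : σ → R) (k : ℕ) :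
    eval (c • x) (esymm σ R k) = c ^ k * eval x (esymm σ R k) := by
  simp only [esymm, map_sum, map_prod, eval_X, Pi.smul_apply, smul_eq_mul, prod_mul_distrib,
    prod_const, mul_sum]
  refine sum_congr rfl fun t ht => ?_
  rw [(mem_powersetCard.1 ht).2]

theorem two_mul_eval_esymm_two [CommRing R] (x : σ → R) :
    2 * eval x (esymm σ R 2) = (∑ i, x i) ^ 2 - ∑ i, x i ^ 2 := by
  have h := congrArg (eval x) (psum_eq_mul_esymm_sub_sum σ R 2 two_pos)
  rw [show ({a ∈ antidiagonal 2 | a.1 ∈ Set.Ioo 0 2} : Finset (ℕ × ℕ)) = {(1, 1)} by decide] at h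
  simp only [psum, map_sum, map_pow, eval_X, Nat.reduceAdd, Nat.cast_ofNat, sum_singleton, pow_one,
    esymm_one, neg_mul, one_mul, sub_neg_eq_add, map_add, map_mul, map_neg, map_one,
    eval_ofNat] at h
  linear_combination h

theorem six_mul_eval_esymm_three [CommRing R] (x : σ → R) :
    6 * eval x (esymm σ R 3) =
      (∑ i, x i) ^ 3 - 3 * (∑ i, x i) * ∑ i, x i ^ 2 + 2 * ∑ i, x i ^ 3 := by
  have h := congrArg (eval x) (psum_eq_mul_esymm_sub_sum σ R 3 three_pos)
  rw [show ({a ∈ antidiagonal 3 | a.1 ∈ Set.Ioo 0 3} : Finset (ℕ × ℕ)) = {(1, 2), (2, 1)} by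
    decide] at h
  simp only [psum, map_sum, map_pow, eval_X, Nat.reduceAdd, Nat.cast_ofNat, mem_singleton,
    Prod.mk.injEq, OfNat.one_ne_ofNat, OfNat.ofNat_ne_one, and_self, not_false_eq_true, sum_insert,
    pow_one, esymm_one, neg_mul, one_mul, sum_singleton, even_two, Even.neg_pow, one_pow, map_sub,
    map_mul, map_neg, map_one, eval_ofNat, map_add] at h
  linear_combination -2 * h + (∑ i, x i) * two_mul_eval_esymm_two x

theorem two_mul_eval_esymm_two_le_sq (x : σ → ℝ) :
    2 * eval x (esymm σ ℝ 2) ≤ eval x (esymm σ ℝ 1) ^ 2 := by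
  rw [two_mul_eval_esymm_two, esymm_one]
  simpa using sum_nonneg fun i (_ : i ∈ univ) => sq_nonneg (x i)

end MvPolynomial

section PowerSums

variable {ι : Type*} [Fintype ι]

theorem not_sum_sq_eq_and_sum_cube_eq (y : ι → ℝ) :
    ¬ (∑ i, y i ^ 2 = (∑ i, y i) ^ 2 - 2 ∧ ∑ i, y i ^ 3 = (∑ i, y i) ^ 3) := by
  rintro ⟨hB, hC⟩
  set A := ∑ i, y i
  have hy : A ^ 2 ≤ Fintype.card ι * ∑ i, y i ^ 2 := sq_sum_le_card_mul_sum_sq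
  have hu : (∑ i, (y i ^ 2 - A * y i)) ^ 2 ≤ Fintype.card ι * ∑ i, (y i ^ 2 - A * y i) ^ 2 :=
    sq_sum_le_card_mul_sum_sq
  have hD : ∑ i, (y i ^ 2) ^ 2 ≤ (∑ i, y i ^ 2) ^ 2 :=
    sum_sq_le_sq_sum_of_nonneg fun i _ => sq_nonneg (y i)
  have hu_sum : ∑ i, (y i ^ 2 - A * y i) = ∑ i, y i ^ 2 - A ^ 2 := by
    rw [sum_sub_distrib, ← mul_sum, sq]
  have hu_sq : ∑ i, (y i ^ 2 - A * y i) ^ 2 =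
      ∑ i, (y i ^ 2) ^ 2 - 2 * A * ∑ i, y i ^ 3 + A ^ 2 * ∑ i, y i ^ 2 := by
    calc ∑ i, (y i ^ 2 - A * y i) ^ 2
        = ∑ i, ((y i ^ 2) ^ 2 - 2 * A * y i ^ 3 + A ^ 2 * y i ^ 2) :=
          sum_congr rfl fun i _ => by ring
      _ = _ := by rw [sum_add_distrib, sum_sub_distrib, ← mul_sum, ← mul_sum]
  rw [hu_sum, hu_sq, hB, hC] at hu
  rw [hB] at hD hy
  nlinarith

theorem eval_esymm_three_ne_eval_esymm_one (y : ι → ℝ) (h : eval y (esymm ι ℝ 2) = 1) :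
    eval y (esymm ι ℝ 3) ≠ eval y (esymm ι ℝ 1) := by
  intro h31
  have h2 := two_mul_eval_esymm_two y
  have h3 := six_mul_eval_esymm_three y
  rw [esymm_one, eval_sum] at h31
  simp only [eval_X] at h31
  rw [h] at h2
  rw [h31] at h3
  exact not_sum_sq_eq_and_sum_cube_eq y
    ⟨by linear_combination h2, by linear_combination -h3 / 2 + 3 / 2 * (∑ i, y i) * h2⟩

end PowerSums

section EsymmRegion

variable (ι : Type*) [Fintype ι]

def esymmRegion : Fin 3 → Set (ι → ℝ) :=
  ![{y | eval y (esymm ι ℝ 2) < 1},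
    {y | 1 < eval y (esymm ι ℝ 2) ∧ 0 < eval y (esymm ι ℝ 1)},
    {y | 1 < eval y (esymm ι ℝ 2) ∧ eval y (esymm ι ℝ 1) < 0}]

theorem isOpen_esymmRegion (i : Fin 3) : IsOpen (esymmRegion ι i) := by
  have h1 := continuous_eval (σ := ι) (esymm ι ℝ 1)
  have h2 := continuous_eval (σ := ι) (esymm ι ℝ 2)
  fin_cases i
  · exact isOpen_lt h2 continuous_const
  · exact (isOpen_lt continuous_const h2).inter (isOpen_lt continuous_const h1)
  · exact (isOpen_lt continuous_const h2).inter (isOpen_lt h1 continuous_const)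

theorem pairwise_disjoint_esymmRegion : Pairwise (Disjoint on esymmRegion ι) := by
  intro i j hij
  rw [Function.onFun, Set.disjoint_left]
  fin_cases i <;> fin_cases j <;> simp_all [esymmRegion] <;> intros <;> linarith

theorem iUnion_esymmRegion : ⋃ i, esymmRegion ι i = {y | eval y (esymm ι ℝ 2) ≠ 1} := by
  ext y
  have hle := two_mul_eval_esymm_two_le_sq y
  simp only [esymmRegion, Set.mem_iUnion, Fin.exists_fin_succ, Fin.exists_fin_zero]
  simp only [Fin.succ_zero_eq_one, Fin.succ_one_eq_two, Matrix.cons_val, Set.mem_ofPred_eq]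
  constructor
  · rintro (h | h | h | h)
    exacts [h.ne, h.1.ne', h.1.ne', h.elim]
  · intro h
    rcases h.lt_or_gt with h | h
    · exact Or.inl h
    · rcases lt_trichotomy (eval y (esymm ι ℝ 1)) 0 with h1 | h1 | h1
      · exact Or.inr (Or.inr (Or.inl ⟨h, h1⟩))
      · nlinarith
      · exact Or.inr (Or.inl ⟨h, h1⟩)

theorem starConvex_esymmRegion_zero : StarConvex ℝ 0 (esymmRegion ι 0) := by
  intro y (hy : eval y (esymm ι ℝ 2) < 1) a b _ hb hab
  show eval (a • 0 + b • y) (esymm ι ℝ 2) < 1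
  rw [smul_zero, zero_add, eval_esymm_smul]
  rcases le_or_gt (eval y (esymm ι ℝ 2)) 0 with hy0 | hy0
  · nlinarith
  · nlinarith [mul_le_mul_of_nonneg_right (show b ^ 2 ≤ 1 by nlinarith) hy0.le]

theorem starConvex_esymmRegion_one (hι : 2 ≤ Fintype.card ι) :
    StarConvex ℝ (fun _ => 2) (esymmRegion ι 1) := by
  rintro y ⟨hy2, hy1⟩ a b ha hb hab
  have hm : (2 : ℝ) ≤ Fintype.card ι := by exact_mod_cast hι
  have hB : 2 < (∑ i, y i) ^ 2 - ∑ i, y i ^ 2 := by linarith [two_mul_eval_esymm_two y]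
  have hsq : 0 ≤ ∑ i, y i ^ 2 := sum_nonneg fun i _ => sq_nonneg (y i)
  simp only [esymm_one, map_sum, eval_X] at hy1
  have hA : 1 < ∑ i, y i := by nlinarith
  refine ⟨?_, ?_⟩
  · -- with `m = card ι` and `pₖ = ∑ yᵢᵏ`:
    -- `2σ₂(a • 2 + b • y) - 2 = a²(4m² - 4m - 2) + 4ab((m - 1)p₁ - 1) + b²(p₁² - p₂ - 2)`
    rw [← mul_lt_mul_iff_right₀ two_pos, two_mul_eval_esymm_two]
    simp only [Pi.add_apply, Pi.smul_apply, smul_eq_mul, add_sq, mul_pow, sum_add_distrib,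
      ← mul_sum, sum_const, card_univ, nsmul_eq_mul]
    have hcross : 0 ≤ a * b * ((Fintype.card ι - 1) * ∑ i, y i - 1) :=
      mul_nonneg (mul_nonneg ha hb) (by nlinarith)
    rcases ha.eq_or_lt with rfl | ha
    · obtain rfl : b = 1 := by linarith
      nlinarith
    · have hm' : 0 < 4 * (Fintype.card ι : ℝ) ^ 2 - 4 * Fintype.card ι - 2 := by nlinarith
      have hab2 : (a + b) ^ 2 = 1 := by rw [hab, one_pow]
      have ha2 := mul_pos (mul_pos ha ha) hm'
      have hb2 := mul_nonneg (sq_nonneg b) (sub_nonneg.2 hB.le)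
      linear_combination ha2 + 4 * hcross + hb2 - 2 * hab2
  · simp only [esymm_one, map_sum, eval_X, Pi.add_apply, Pi.smul_apply, smul_eq_mul,
      sum_add_distrib, ← mul_sum, sum_const, card_univ, nsmul_eq_mul]
    rcases hb.eq_or_lt with rfl | hb
    · nlinarith
    · nlinarith [mul_pos hb hy1]

theorem esymmRegion_two : esymmRegion ι 2 = -esymmRegion ι 1 := by
  have h (y : ι → ℝ) (k : ℕ) : eval (-y) (esymm ι ℝ k) = (-1) ^ k * eval y (esymm ι ℝ k) := by
    rw [← eval_esymm_smul, neg_one_smul]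
  ext y
  simp [esymmRegion, h]

theorem isPathConnected_esymmRegion (hι : 2 ≤ Fintype.card ι) (i : Fin 3) :
    IsPathConnected (esymmRegion ι i) := by
  have h0 : (0 : ι → ℝ) ∈ esymmRegion ι 0 := by
    show eval 0 (esymm ι ℝ 2) < 1
    rw [← zero_smul ℝ (0 : ι → ℝ), eval_esymm_smul]
    norm_num
  have h2 : (fun _ => (2 : ℝ)) ∈ esymmRegion ι 1 := by
    have hm : (2 : ℝ) ≤ Fintype.card ι := by exact_mod_cast hι
    have h := two_mul_eval_esymm_two (fun _ : ι => (2 : ℝ))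
    simp only [sum_const, card_univ, nsmul_eq_mul] at h
    refine ⟨by nlinarith, ?_⟩
    simp only [esymm_one, map_sum, eval_X, sum_const, card_univ, nsmul_eq_mul]
    positivity
  fin_cases i
  · exact (starConvex_esymmRegion_zero ι).isPathConnected h0
  · exact (starConvex_esymmRegion_one ι hι).isPathConnected h2
  · show IsPathConnected (esymmRegion ι 2)
    rw [esymmRegion_two]
    exact (starConvex_esymmRegion_one ι hι).neg.isPathConnected (by simpa using h2)

end EsymmRegion

section ComponentCount

variable {X ι : Type*} [TopologicalSpace X] {Z : Set X} {U : ι → Set X}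

theorem connectedComponentIn_eq_inter_of_isOpen_cover (hU : ∀ i, IsOpen (U i))
    (hdisj : Pairwise (Disjoint on U)) (hZ : Z ⊆ ⋃ i, U i) {i : ι}
    (hconn : IsPreconnected (Z ∩ U i)) {x : X} (hx : x ∈ Z ∩ U i) :
    connectedComponentIn Z x = Z ∩ U i := by
  refine subset_antisymm (Set.subset_inter (connectedComponentIn_subset Z x) ?_)
    (hconn.subset_connectedComponentIn hx Set.inter_subset_left)
  have hW : IsOpen (⋃ (j) (_ : j ≠ i), U j) := isOpen_iUnion fun j => isOpen_iUnion fun _ => hU j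
  refine isPreconnected_connectedComponentIn.subset_left_of_subset_union (hU i) hW
    (Set.disjoint_iUnion₂_right.2 fun j hj => hdisj hj.symm) ?_
    ⟨x, mem_connectedComponentIn hx.1, hx.2⟩
  intro z hz
  obtain ⟨j, hj⟩ := Set.mem_iUnion.1 (hZ (connectedComponentIn_subset Z x hz))
  by_cases hji : j = i
  · exact Or.inl (hji ▸ hj)
  · exact Or.inr (Set.mem_iUnion₂.2 ⟨j, hji, hj⟩)

theorem ncard_connectedComponentIn_of_isOpen_cover (hU : ∀ i, IsOpen (U i))
    (hdisj : Pairwise (Disjoint on U)) (hZ : Z ⊆ ⋃ i, U i) (hconn : ∀ i, IsConnected (Z ∩ U i)) :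
    {K | ∃ x ∈ Z, K = connectedComponentIn Z x}.ncard = Nat.card ι := by
  have hcomp {i x} := connectedComponentIn_eq_inter_of_isOpen_cover hU hdisj hZ
    (hconn i).isPreconnected (x := x)
  have hrange : {K | ∃ x ∈ Z, K = connectedComponentIn Z x} = Set.range fun i => Z ∩ U i := by
    ext K
    constructor
    · rintro ⟨x, hx, rfl⟩
      obtain ⟨i, hi⟩ := Set.mem_iUnion.1 (hZ hx)
      exact ⟨i, (hcomp ⟨hx, hi⟩).symm⟩
    · rintro ⟨i, rfl⟩
      obtain ⟨x, hx⟩ := (hconn i).nonempty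
      exact ⟨x, hx.1, (hcomp hx).symm⟩
  rw [hrange, Set.ncard_range_of_injective]
  intro i j hij
  obtain ⟨x, hx⟩ := (hconn i).nonempty
  by_contra hne
  have hxj : x ∈ Z ∩ U j := (show Z ∩ U i = Z ∩ U j from hij) ▸ hx
  exact Set.disjoint_left.1 (hdisj hne) hx.2 hxj.2

end ComponentCount

theorem isConnected_setOf_add_mul_eq_zero_inter_preimage_tail {m : ℕ}
    {f g : (Fin m → ℝ) → ℝ} (hf : Continuous f) (hg : Continuous g) {V : Set (Fin m → ℝ)}
    (hV : IsConnected V) (hgV : ∀ y ∈ V, g y ≠ 0) :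
    IsConnected ({x : Fin (m + 1) → ℝ | f (Fin.tail x) + x 0 * g (Fin.tail x) = 0} ∩
      Fin.tail ⁻¹' V) := by
  have himage : {x : Fin (m + 1) → ℝ | f (Fin.tail x) + x 0 * g (Fin.tail x) = 0} ∩
      Fin.tail ⁻¹' V = (fun y => Fin.cons (-f y / g y) y) '' V := by
    ext x
    constructor
    · rintro ⟨hx : f (Fin.tail x) + x 0 * g (Fin.tail x) = 0, hxV⟩
      refine ⟨Fin.tail x, hxV, ?_⟩
      have hx0 : -f (Fin.tail x) / g (Fin.tail x) = x 0 := by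
        rw [neg_div, neg_eq_iff_eq_neg, div_eq_iff (hgV _ hxV)]
        linear_combination hx
      simp only [hx0, Fin.cons_self_tail]
    · rintro ⟨y, hy, rfl⟩
      refine ⟨?_, by simpa using hy⟩
      simp only [Set.mem_ofPred_eq, Fin.tail_cons, Fin.cons_zero]
      field_simp [hgV y hy]
      ring
  rw [himage]
  exact hV.image _ ((hf.neg.continuousOn.div hg.continuousOn hgV).finCons continuousOn_id)

theorem setOf_eval_esymm_three_sub_esymm_one_eq_zero (m : ℕ) :
    {x : Fin (m + 1) → ℝ | eval x (esymm (Fin (m + 1)) ℝ 3 - esymm (Fin (m + 1)) ℝ 1) = 0} =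
      {x | eval (Fin.tail x) (esymm (Fin m) ℝ 3) - eval (Fin.tail x) (esymm (Fin m) ℝ 1) +
        x 0 * (eval (Fin.tail x) (esymm (Fin m) ℝ 2) - 1) = 0} := by
  ext x
  conv_lhs => rw [Set.mem_ofPred_eq, ← Fin.cons_self_tail x, eval_esymm_three_sub_esymm_one_cons]
  rfl

/-- For `n ≥ 3`, the real zero set of `σ_{3,n} - σ_{1,n}` has exactly 3 connected
components. -/
theorem sigma3_minus_sigma1_components (n : ℕ) (hn : 3 ≤ n) :
    letI Z : Set (Fin n → ℝ) :=
      {x | eval x (esymm (Fin n) ℝ 3 - esymm (Fin n) ℝ 1) = 0}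
    {K | ∃ x ∈ Z, K = connectedComponentIn Z x}.ncard = 3 := by
  obtain ⟨m, rfl⟩ : ∃ m, n = m + 1 := ⟨n - 1, by omega⟩
  have hmem (y : Fin m → ℝ) :
      (∃ i, y ∈ esymmRegion (Fin m) i) ↔ eval y (esymm (Fin m) ℝ 2) ≠ 1 := by
    simpa using Set.ext_iff.1 (iUnion_esymmRegion (Fin m)) y
  rw [setOf_eval_esymm_three_sub_esymm_one_eq_zero]
  refine (ncard_connectedComponentIn_of_isOpen_cover
    (U := fun i => Fin.tail ⁻¹' esymmRegion (Fin m) i)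
    (fun i => (isOpen_esymmRegion _ i).preimage continuous_id.finTail)
    (fun i j hij => (pairwise_disjoint_esymmRegion _ hij).preimage _) ?_ fun i => ?_).trans
    (Nat.card_fin 3)
  · intro x (hx : _ = 0)
    refine Set.mem_iUnion.2 ((hmem _).2 fun h2 => eval_esymm_three_ne_eval_esymm_one _ h2 ?_)
    rw [h2, sub_self, mul_zero, add_zero, sub_eq_zero] at hx
    exact hx
  · exact isConnected_setOf_add_mul_eq_zero_inter_preimage_tail
      (f := fun y => eval y (esymm (Fin m) ℝ 3) - eval y (esymm (Fin m) ℝ 1))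
      (g := fun y => eval y (esymm (Fin m) ℝ 2) - 1)
      ((continuous_eval _).sub (continuous_eval _)) ((continuous_eval _).sub continuous_const)
      (isPathConnected_esymmRegion _ (by rw [Fintype.card_fin]; omega) i).isConnected
      fun y hy => sub_ne_zero.2 ((hmem y).1 ⟨i, hy⟩)
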